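/- If G is a simple graph of order n ≥ 2 whose complement has at least two bipartite components, then q₂(G) = n − 2. -/

import Mathlib

open Matrix SimpleGraph
open scoped Classical

/-- The `k`-th largest eigenvalue (1-indexed, counted with multiplicity) of a real
symmetric (Hermitian) matrix; junk value `0` if `M` is not Hermitian or `k` is out of range. -/
noncomputable def kthEig {V : Type*} [Fintype V] [DecidableEq V]
    (M : Matrix V V ℝ) (k : ℕ) : ℝ :=
  if hM : M.IsHermitian then
    if h : k - 1 < Fintype.card V then
      letI f : Fin (Fintype.card V) → ℝ := hM.eigenvalues ∘ (Fintype.equivFin V).symm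
      (f ∘ Tuple.sort f) (Fin.rev ⟨k - 1, h⟩)
    else 0
  else 0

/-- The signless Laplacian `Q(G) = D(G) + A(G)` of a simple graph `G`. -/
noncomputable def signlessLap {V : Type*} [Fintype V] [DecidableEq V]
    (G : SimpleGraph V) [DecidableRel G.Adj] : Matrix V V ℝ :=
  G.degMatrix ℝ + G.adjMatrix ℝ

/-- `qEig G k` is the `k`-th largest signless Laplacian eigenvalue `q_k(G)`. -/
noncomputable def qEig {V : Type*} [Fintype V] [DecidableEq V]
    (G : SimpleGraph V) [DecidableRel G.Adj] (k : ℕ) : ℝ :=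
  kthEig (signlessLap G) k

/-- `c` is a bipartite connected component of `H`: the vertex set of the component splits
into two disjoint classes `U`, `W` such that every edge of the component joins `U` and `W`. -/
def IsBipartiteComponent {V : Type*} (H : SimpleGraph V) (c : H.ConnectedComponent) : Prop :=
  ∃ U W : Set V, U ∪ W = c.supp ∧ Disjoint U W ∧
    ∀ ⦃u v : V⦄, u ∈ c.supp → H.Adj u v → (u ∈ U ∧ v ∈ W) ∨ (u ∈ W ∧ v ∈ U)

/-- `c` is a balanced bipartite connected component of `H`: bipartite with vertex classes
of equal size. -/
def IsBalancedBipartiteComponent {V : Type*} (H : SimpleGraph V)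
    (c : H.ConnectedComponent) : Prop :=
  ∃ U W : Set V, U ∪ W = c.supp ∧ Disjoint U W ∧ U.ncard = W.ncard ∧
    ∀ ⦃u v : V⦄, u ∈ c.supp → H.Adj u v → (u ∈ U ∧ v ∈ W) ∨ (u ∈ W ∧ v ∈ U)

/-- `G` is the complete multipartite graph whose parts are the fibers of `p`:
two vertices are adjacent iff they lie in different parts. -/
def IsCompleteMultipartiteWith {V ι : Type*} (G : SimpleGraph V) (p : V → ι) : Prop :=
  ∀ u v : V, G.Adj u v ↔ p u ≠ p v

/-!
Since `Q(G) + Q(Gᶜ) = (n - 2) I + J` and `Q(Gᶜ)` is positive semidefinite, the quadratic form of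
`Q(G)` is at most `(n - 2) ‖x‖²` on the hyperplane `∑ x = 0`, so by the Courant–Fischer dimension
count at most one eigenvalue of `Q(G)` exceeds `n - 2`. Conversely, every bipartite component of
`Gᶜ` carries a `±1` vector in the kernel of `Q(Gᶜ)`, where the form of `Q(G)` is at least
`(n - 2) ‖x‖²`; two such components give two eigenvalues that are at least `n - 2`.
-/

open Finset Module

lemma LinearMap.finrank_le_finrank_ker_add_one {K E : Type*} [Field K] [AddCommGroup E]
    [Module K E] [FiniteDimensional K E] (φ : E →ₗ[K] K) :
    finrank K E ≤ finrank K (LinearMap.ker φ) + 1 := by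
  have := φ.finrank_range_add_finrank_ker
  have := (LinearMap.range φ).finrank_le
  rw [finrank_self] at this
  omega

lemma Antitone.eq_of_card_lt_le {α : Type*} [LinearOrder α] {m : ℕ} {s : Fin m → α}
    (hs : Antitone s) {t : α} {i : Fin m} (h₁ : #{j | t < s j} ≤ i) (h₂ : i < #{j | t ≤ s j}) :
    s i = t := by
  apply le_antisymm
  · by_contra! hlt
    have hsub : Iic i ⊆ ({j | t < s j} : Finset (Fin m)) := fun j hj =>
      mem_filter.mpr ⟨mem_univ j, hlt.trans_le (hs (mem_Iic.mp hj))⟩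
    have := card_le_card hsub
    rw [Fin.card_Iic] at this
    omega
  · by_contra! hlt
    have hsub : ({j | t ≤ s j} : Finset (Fin m)) ⊆ Iio i := fun j hj => by
      rw [mem_Iio]
      by_contra! hij
      exact (hlt.trans_le (mem_filter.mp hj).2).not_ge (hs hij)
    have := card_le_card hsub
    rw [Fin.card_Iio] at this
    omega

namespace Matrix.IsHermitian

variable {V : Type*} [Fintype V] [DecidableEq V] {M : Matrix V V ℝ} (hM : M.IsHermitian)

noncomputable def eigenCoords : (V → ℝ) →ₗ[ℝ] V → ℝ :=
  toLin' (star (hM.eigenvectorUnitary : Matrix V V ℝ))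

lemma eigenCoords_apply (x : V → ℝ) :
    hM.eigenCoords x = star (hM.eigenvectorUnitary : Matrix V V ℝ) *ᵥ x := rfl

lemma vecMul_eigenvectorUnitary (x : V → ℝ) :
    x ᵥ* (hM.eigenvectorUnitary : Matrix V V ℝ) = hM.eigenCoords x := by
  rw [eigenCoords_apply, star_eq_conjTranspose, conjTranspose_eq_transpose_of_trivial,
    mulVec_transpose]

lemma mulVec_eigenCoords (x : V → ℝ) :
    (hM.eigenvectorUnitary : Matrix V V ℝ) *ᵥ hM.eigenCoords x = x := by
  rw [eigenCoords_apply, mulVec_mulVec, mem_unitaryGroup_iff.mp hM.eigenvectorUnitary.2,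
    one_mulVec]

lemma eigenCoords_ne_zero {x : V → ℝ} (hx : x ≠ 0) : hM.eigenCoords x ≠ 0 := by
  intro h
  apply hx
  rw [← hM.mulVec_eigenCoords x, h, mulVec_zero]

lemma dotProduct_mulVec_eq_sum_eigenvalues (x : V → ℝ) :
    x ⬝ᵥ (M *ᵥ x) = ∑ i, hM.eigenvalues i * hM.eigenCoords x i ^ 2 := by
  conv_lhs => rw [hM.spectral_theorem, Unitary.conjStarAlgAut_apply]
  rw [← mulVec_mulVec, ← mulVec_mulVec, dotProduct_mulVec, ← eigenCoords_apply,
    vecMul_eigenvectorUnitary]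
  simp only [dotProduct, mulVec_diagonal, Function.comp_apply, RCLike.ofReal_real_eq_id, id]
  exact Finset.sum_congr rfl fun i _ => by ring

lemma dotProduct_self_eq_sum_eigenCoords_sq (x : V → ℝ) :
    x ⬝ᵥ x = ∑ i, hM.eigenCoords x i ^ 2 := by
  nth_rw 2 [← hM.mulVec_eigenCoords x]
  rw [dotProduct_mulVec, vecMul_eigenvectorUnitary]
  simp only [dotProduct, sq]

lemma exists_ne_zero_mem_of_eigenCoords_supported (S : Submodule ℝ (V → ℝ)) (P : Finset V)
    (h : Fintype.card V < finrank ℝ S + #P) :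
    ∃ x ∈ S, x ≠ 0 ∧ ∀ i ∉ P, hM.eigenCoords x i = 0 := by
  set f := LinearMap.funLeft ℝ ℝ (Subtype.val : {i // i ∉ P} → V) ∘ₗ hM.eigenCoords
  have hT : #P ≤ finrank ℝ (LinearMap.ker f) := by
    have hrange := f.finrank_range_add_finrank_ker
    have hle := Submodule.finrank_le (LinearMap.range f)
    simp only [finrank_fintype_fun_eq_card, Fintype.card_subtype_compl, Fintype.card_coe]
      at hrange hle
    have := P.card_le_univ
    omega
  have hST : ¬ Disjoint S (LinearMap.ker f) := fun hd => by
    have := Submodule.finrank_add_finrank_le_of_disjoint hd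
    rw [finrank_fintype_fun_eq_card] at this
    omega
  rw [Submodule.disjoint_def] at hST
  push Not at hST
  obtain ⟨x, hxS, hxT, hx⟩ := hST
  exact ⟨x, hxS, hx, fun i hi => congrFun (LinearMap.mem_ker.mp hxT) ⟨i, hi⟩⟩

lemma card_lt_eigenvalues_add_finrank_le {t : ℝ} (S : Submodule ℝ (V → ℝ))
    (hS : ∀ x ∈ S, x ⬝ᵥ (M *ᵥ x) ≤ t * (x ⬝ᵥ x)) :
    #{i | t < hM.eigenvalues i} + finrank ℝ S ≤ Fintype.card V := by
  by_contra! h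
  obtain ⟨x, hxS, hx, hsupp⟩ :=
    hM.exists_ne_zero_mem_of_eigenCoords_supported S {i | t < hM.eigenvalues i} (by omega)
  obtain ⟨j, hj⟩ : ∃ j, hM.eigenCoords x j ≠ 0 := Function.ne_iff.mp (hM.eigenCoords_ne_zero hx)
  have hj_lt : t < hM.eigenvalues j := by
    by_contra hj'
    exact hj (hsupp j (by simpa using hj'))
  refine (hS x hxS).not_gt ?_
  rw [hM.dotProduct_mulVec_eq_sum_eigenvalues, hM.dotProduct_self_eq_sum_eigenCoords_sq, mul_sum]
  refine sum_lt_sum (fun i _ => ?_) ⟨j, mem_univ j, by gcongr⟩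
  by_cases hi : t < hM.eigenvalues i
  · gcongr
  · simp [hsupp i (by simpa using hi)]

lemma finrank_le_card_le_eigenvalues {t : ℝ} (S : Submodule ℝ (V → ℝ))
    (hS : ∀ x ∈ S, t * (x ⬝ᵥ x) ≤ x ⬝ᵥ (M *ᵥ x)) :
    finrank ℝ S ≤ #{i | t ≤ hM.eigenvalues i} := by
  by_contra! h
  have hcard := card_filter_add_card_filter_not (s := univ) (fun i => hM.eigenvalues i < t)
  simp only [not_lt, card_univ] at hcard
  obtain ⟨x, hxS, hx, hsupp⟩ :=
    hM.exists_ne_zero_mem_of_eigenCoords_supported S {i | hM.eigenvalues i < t} (by omega)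
  obtain ⟨j, hj⟩ : ∃ j, hM.eigenCoords x j ≠ 0 := Function.ne_iff.mp (hM.eigenCoords_ne_zero hx)
  have hj_lt : hM.eigenvalues j < t := by
    by_contra hj'
    exact hj (hsupp j (by simpa using hj'))
  refine (hS x hxS).not_gt ?_
  rw [hM.dotProduct_mulVec_eq_sum_eigenvalues, hM.dotProduct_self_eq_sum_eigenCoords_sq, mul_sum]
  refine sum_lt_sum (fun i _ => ?_) ⟨j, mem_univ j, by gcongr⟩
  by_cases hi : hM.eigenvalues i < t
  · gcongr
  · simp [hsupp i (by simpa using hi)]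

end Matrix.IsHermitian

lemma kthEig_eq_of_card_lt_le {V : Type*} [Fintype V] [DecidableEq V] {M : Matrix V V ℝ}
    (hM : M.IsHermitian) {k : ℕ} {t : ℝ} (h₁ : #{i | t < hM.eigenvalues i} < k)
    (h₂ : k ≤ #{i | t ≤ hM.eigenvalues i}) : kthEig M k = t := by
  have hk : k - 1 < Fintype.card V :=
    lt_of_lt_of_le (by omega) (h₂.trans (card_le_univ _))
  rw [kthEig, dif_pos hM, dif_pos hk]
  set f := hM.eigenvalues ∘ (Fintype.equivFin V).symm
  -- `e` enumerates the vertices so that the eigenvalues are listed in non-increasing order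
  set e : Fin (Fintype.card V) ≃ V :=
    Fin.revPerm.trans ((Tuple.sort f).trans (Fintype.equivFin V).symm)
  have hcount (p : ℝ → Prop) : #{j | p (hM.eigenvalues (e j))} = #{i | p (hM.eigenvalues i)} :=
    card_equiv e (by simp)
  refine ((Tuple.monotone_sort f).comp_antitone Fin.rev_anti).eq_of_card_lt_le
    (i := ⟨k - 1, hk⟩) ?_ ?_
  · show #{j | t < hM.eigenvalues (e j)} ≤ k - 1
    rw [hcount (t < ·)]
    omega
  · show k - 1 < #{j | t ≤ hM.eigenvalues (e j)}
    rw [hcount (t ≤ ·)]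
    omega

namespace SimpleGraph

variable {V : Type*} [Fintype V] [DecidableEq V] (G : SimpleGraph V) [DecidableRel G.Adj]

lemma isHermitian_signlessLap : (signlessLap G).IsHermitian :=
  (G.isHermitian_degMatrix ℝ).add (G.isHermitian_adjMatrix ℝ)

lemma signlessLap_mulVec_apply (x : V → ℝ) (v : V) :
    (signlessLap G *ᵥ x) v = ∑ u ∈ G.neighborFinset v, (x v + x u) := by
  simp [signlessLap, add_mulVec, degMatrix_mulVec_apply, adjMatrix_mulVec_apply, sum_add_distrib]

lemma dotProduct_signlessLap_mulVec (x : V → ℝ) :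
    x ⬝ᵥ (signlessLap G *ᵥ x) = (∑ i, ∑ j, if G.Adj i j then (x i + x j) ^ 2 else 0) / 2 := by
  simp_rw [signlessLap, add_mulVec, dotProduct_add, dotProduct_mulVec_degMatrix,
    dotProduct_mulVec_adjMatrix, ← sum_add_distrib, degree_eq_sum_if_adj, sum_mul, ite_mul,
    one_mul, zero_mul, ← sum_add_distrib, ite_add_ite, add_zero]
  -- symmetrize: swap `i` and `j` in one of two copies of the form
  rw [← add_self_div_two (∑ i : V, ∑ j : V, _)]
  conv_lhs => enter [1, 2, 2, i, 2, j]; rw [if_congr (adj_comm G i j) rfl rfl]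
  conv_lhs => enter [1, 2]; rw [sum_comm]
  simp_rw [← sum_add_distrib, ite_add_ite]
  congr 2 with i
  congr 2 with j
  ring_nf

lemma dotProduct_signlessLap_mulVec_nonneg (x : V → ℝ) : 0 ≤ x ⬝ᵥ (signlessLap G *ᵥ x) := by
  rw [dotProduct_signlessLap_mulVec]
  have : ∀ i j, 0 ≤ if G.Adj i j then (x i + x j) ^ 2 else 0 := fun i j => by
    split_ifs <;> positivity
  positivity

lemma signlessLap_add_signlessLap_compl :
    signlessLap G + signlessLap Gᶜ = ((Fintype.card V : ℝ) - 2) • 1 + of fun _ _ => 1 := by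
  ext u v
  rcases eq_or_ne u v with rfl | huv
  · have hdeg := G.degree_compl u
    have hlt := G.degree_lt_card_verts u
    simp only [signlessLap, degMatrix, Matrix.add_apply, diagonal_apply_eq, adjMatrix_apply,
      SimpleGraph.irrefl, ↓reduceIte, add_zero, hdeg, Matrix.smul_apply, one_apply_eq, smul_eq_mul,
      mul_one, of_apply]
    rw [Nat.cast_sub (by omega), Nat.cast_sub (by omega)]
    push_cast
    ring
  · by_cases h : G.Adj u v <;> simp [signlessLap, degMatrix, huv, h, one_apply_ne huv]

lemma dotProduct_signlessLap_mulVec_add_compl (x : V → ℝ) :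
    x ⬝ᵥ (signlessLap G *ᵥ x) + x ⬝ᵥ (signlessLap Gᶜ *ᵥ x) =
      ((Fintype.card V : ℝ) - 2) * (x ⬝ᵥ x) + (∑ v, x v) ^ 2 := by
  have hJ : x ⬝ᵥ ((of fun _ _ => (1 : ℝ)) *ᵥ x) = (∑ v, x v) ^ 2 := by
    simp only [dotProduct, mulVec, of_apply, one_mul, sq, sum_mul]
  rw [← dotProduct_add, ← add_mulVec, signlessLap_add_signlessLap_compl, add_mulVec,
    dotProduct_add, smul_mulVec, one_mulVec, dotProduct_smul, smul_eq_mul, hJ]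

lemma signlessLap_mulVec_eq_zero_of_forall_adj {x : V → ℝ}
    (hx : ∀ u v, G.Adj u v → x u + x v = 0) : signlessLap G *ᵥ x = 0 := by
  ext v
  rw [signlessLap_mulVec_apply]
  exact sum_eq_zero fun u hu => hx v u ((mem_neighborFinset G v u).mp hu)

lemma dotProduct_signlessLap_mulVec_le_of_sum_eq_zero {x : V → ℝ} (hx : ∑ v, x v = 0) :
    x ⬝ᵥ (signlessLap G *ᵥ x) ≤ ((Fintype.card V : ℝ) - 2) * (x ⬝ᵥ x) := by
  have hsum := G.dotProduct_signlessLap_mulVec_add_compl x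
  have hnonneg := Gᶜ.dotProduct_signlessLap_mulVec_nonneg x
  rw [hx] at hsum
  linarith

lemma le_dotProduct_signlessLap_mulVec_of_compl_mulVec_eq_zero {x : V → ℝ}
    (hx : signlessLap Gᶜ *ᵥ x = 0) :
    ((Fintype.card V : ℝ) - 2) * (x ⬝ᵥ x) ≤ x ⬝ᵥ (signlessLap G *ᵥ x) := by
  have hsum := G.dotProduct_signlessLap_mulVec_add_compl x
  rw [hx, dotProduct_zero, add_zero] at hsum
  linarith [sq_nonneg (∑ v, x v)]

end SimpleGraph

lemma IsBipartiteComponent.exists_signlessLap_mulVec_eq_zero {V : Type*} [Fintype V]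
    [DecidableEq V] {G : SimpleGraph V} [DecidableRel G.Adj] {c : G.ConnectedComponent}
    (hc : IsBipartiteComponent G c) :
    ∃ x : V → ℝ, signlessLap G *ᵥ x = 0 ∧ ∀ v, x v ≠ 0 ↔ v ∈ c.supp := by
  obtain ⟨U, W, hUW, hdisj, hbip⟩ := hc
  have hU {v} (hv : v ∈ U) : U.indicator 1 v - W.indicator 1 v = (1 : ℝ) := by
    simp [hv, Set.disjoint_left.mp hdisj hv]
  have hW {v} (hv : v ∈ W) : U.indicator 1 v - W.indicator 1 v = (-1 : ℝ) := by
    simp [hv, Set.disjoint_right.mp hdisj hv]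
  have hout {v} (hv : v ∉ c.supp) : U.indicator 1 v - W.indicator 1 v = (0 : ℝ) := by
    rw [← hUW, Set.mem_union, not_or] at hv
    simp [hv.1, hv.2]
  refine ⟨U.indicator 1 - W.indicator 1, G.signlessLap_mulVec_eq_zero_of_forall_adj ?_, ?_⟩
  · intro u v huv
    simp only [Pi.sub_apply]
    by_cases hu : u ∈ c.supp
    · rcases hbip hu huv with ⟨hu, hv⟩ | ⟨hu, hv⟩
      · rw [hU hu, hW hv]; norm_num
      · rw [hW hu, hU hv]; norm_num
    · rw [hout hu, hout (by rwa [← c.mem_supp_congr_adj huv]), add_zero]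
  · intro v
    refine ⟨fun hv => by_contra fun h => hv (hout h), fun hv => ?_⟩
    rcases (hUW ▸ hv : v ∈ U ∪ W) with h | h
    · simp [hU h]
    · simp [hW h]

lemma SimpleGraph.card_le_finrank_ker_signlessLap {V : Type*} [Fintype V] [DecidableEq V]
    (G : SimpleGraph V) [DecidableRel G.Adj] (C : Finset G.ConnectedComponent)
    (hC : ∀ c ∈ C, IsBipartiteComponent G c) :
    #C ≤ finrank ℝ (LinearMap.ker (toLin' (signlessLap G))) := by
  choose x hx_ker hx_supp using fun c : C => (hC c c.2).exists_signlessLap_mulVec_eq_zero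
  have hli : LinearIndependent ℝ x := by
    rw [linearIndependent_iff']
    intro s g hg c hc
    obtain ⟨v, hv⟩ := (c : G.ConnectedComponent).exists_rep
    have hxv : x c v ≠ 0 := (hx_supp c v).mpr hv
    have hsum := congrFun hg v
    rw [Finset.sum_apply, sum_eq_single c] at hsum
    · simpa [hxv] using hsum
    · intro d _ hdc
      have : x d v = 0 := by
        by_contra h
        exact hdc (Subtype.ext (((hx_supp d v).mp h).symm.trans hv))
      simp [this]
    · exact fun h => absurd hc h
  calc #C = finrank ℝ (Submodule.span ℝ (Set.range x)) := by
        rw [finrank_span_eq_card hli, Fintype.card_coe]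
    _ ≤ _ := Submodule.finrank_mono (Submodule.span_le.mpr (Set.range_subset_iff.mpr hx_ker))

theorem q2_eq_of_two_bipartite_components_general (n : ℕ)
    (G : SimpleGraph (Fin n)) [DecidableRel G.Adj]
    (h : ∃ c₁ c₂ : Gᶜ.ConnectedComponent, c₁ ≠ c₂ ∧
        IsBipartiteComponent Gᶜ c₁ ∧ IsBipartiteComponent Gᶜ c₂) :
    qEig G 2 = (n : ℝ) - 2 := by
  obtain ⟨c₁, c₂, hne, h₁, h₂⟩ := h
  have hQ := G.isHermitian_signlessLap
  set φ := Fintype.linearCombination ℝ fun _ : Fin n => (1 : ℝ)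
  have hupper := hQ.card_lt_eigenvalues_add_finrank_le (t := n - 2) (LinearMap.ker φ)
    fun x hx => by
      simpa using G.dotProduct_signlessLap_mulVec_le_of_sum_eq_zero
        (by simpa [φ, Fintype.linearCombination_apply] using hx)
  have hcodim := φ.finrank_le_finrank_ker_add_one
  have hlower := hQ.finrank_le_card_le_eigenvalues (t := n - 2)
    (LinearMap.ker (toLin' (signlessLap Gᶜ))) fun x hx => by
      simpa using G.le_dotProduct_signlessLap_mulVec_of_compl_mulVec_eq_zero hx
  have hnullity := Gᶜ.card_le_finrank_ker_signlessLap {c₁, c₂} (by simp [h₁, h₂])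
  rw [card_pair hne] at hnullity
  simp only [finrank_fin_fun, Fintype.card_fin] at hupper hcodim
  exact kthEig_eq_of_card_lt_le hQ (by omega) (by omega)

/-- If `G` is a graph of order `n ≥ 2` whose complement has at least two bipartite
components, then `q₂(G) = n - 2`. -/
theorem q2_eq_of_two_bipartite_components (n : ℕ) (hn : 2 ≤ n)
    (G : SimpleGraph (Fin n)) [DecidableRel G.Adj]
    (h : ∃ c₁ c₂ : Gᶜ.ConnectedComponent, c₁ ≠ c₂ ∧
        IsBipartiteComponent Gᶜ c₁ ∧ IsBipartiteComponent Gᶜ c₂) :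
    qEig G 2 = (n : ℝ) - 2 :=
  q2_eq_of_two_bipartite_components_general n G h
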